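/- Fix an integer n ≥ 1 and a feasible point (a1,a2,b1,b2,c1,c2,d1,d2,e,f,t) of Problem (P) with M2 := (a1+n·a2)²+(b1+n·b2)²+n·e²+n·f² > 0. Suppose there exist λ2 ≥ 0 and μ1 ∈ ℝ satisfying the stationarity conditions of (P) in the variables c2, a2 and e: λ2 − n·μ1 = 0, √2·n·(a1+n·a2)/√M2 − λ2 − n·μ1 = 0, and √2·n·e/√M2 − 2·λ2 = 0. Then a1+n·a2 = e and c1+n·c2 = −e. -/
import Mathlib


/-- Objective of Problem (P0). -/
noncomputable def F0 (n : ℕ) (a1 a2 b1 b2 c1 c2 d1 d2 e f : ℝ) : ℝ :=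
  ((n : ℝ) - 1) * Real.sqrt (a1 ^ 2 + b1 ^ 2 + c1 ^ 2 + d1 ^ 2 + 2 * |a1 * d1 - b1 * c1|) +
    Real.sqrt 2 * Real.sqrt ((a1 + n * a2) ^ 2 + (b1 + n * b2) ^ 2 + n * e ^ 2 + n * f ^ 2)

/-- Objective of Problem (P). -/
noncomputable def FP (n : ℕ) (a1 a2 b1 b2 c1 c2 d1 d2 e f t : ℝ) : ℝ :=
  ((n : ℝ) - 1) * Real.sqrt (a1 ^ 2 + b1 ^ 2 + c1 ^ 2 + d1 ^ 2 + 2 * t) +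
    Real.sqrt 2 * Real.sqrt ((a1 + n * a2) ^ 2 + (b1 + n * b2) ^ 2 + n * e ^ 2 + n * f ^ 2)

/-- Feasible set of Problem (P0). -/
def Feas0 (n : ℕ) (a1 a2 b1 b2 c1 c2 d1 d2 e f : ℝ) : Prop :=
  1 ≤ a1 ∧ 0 ≤ a1 + a2 + 2 * e - c1 - c2 - 1 ∧ 1 ≤ b1 ∧ 0 ≤ b1 + b2 - d1 - d2 - 1 ∧
    1 ≤ d1 ∧ 0 ≤ d1 + d2 - b1 - b2 - 2 * f - 1 ∧
    a1 + c1 + n * (a2 + c2) = 0 ∧ b1 + d1 + n * (b2 + d2) = 0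

/-- Feasible set of Problem (P). -/
def FeasP (n : ℕ) (a1 a2 b1 b2 c1 c2 d1 d2 e f t : ℝ) : Prop :=
  Feas0 n a1 a2 b1 b2 c1 c2 d1 d2 e f ∧
    a1 * d1 - b1 * c1 ≤ t ∧ -(a1 * d1 - b1 * c1) ≤ t ∧ 0 ≤ t

/-- Proposition: the stationarity conditions of Problem (P) in the variables `c2`, `a2`
and `e` force the identities `a1 + n·a2 = e` and `c1 + n·c2 = −e`. -/
theorem stationarity_identities (n : ℕ) (hn : 1 ≤ n)
    (a1 a2 b1 b2 c1 c2 d1 d2 e f t lam2 mu1 : ℝ)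
    (hfeas : FeasP n a1 a2 b1 b2 c1 c2 d1 d2 e f t)
    (hM2 : 0 < (a1 + n * a2) ^ 2 + (b1 + n * b2) ^ 2 + n * e ^ 2 + n * f ^ 2)
    (hlam2 : 0 ≤ lam2)
    (hSc2 : lam2 - n * mu1 = 0)
    (hSa2 : Real.sqrt 2 * n * (a1 + n * a2) /
        Real.sqrt ((a1 + n * a2) ^ 2 + (b1 + n * b2) ^ 2 + n * e ^ 2 + n * f ^ 2)
        - lam2 - n * mu1 = 0)
    (hSe : Real.sqrt 2 * n * e /
        Real.sqrt ((a1 + n * a2) ^ 2 + (b1 + n * b2) ^ 2 + n * e ^ 2 + n * f ^ 2)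
        - 2 * lam2 = 0) :
    a1 + n * a2 = e ∧ c1 + n * c2 = -e := by

  set M2 := (a1 + n * a2) ^ 2 + (b1 + n * b2) ^ 2 + n * e ^ 2 + n * f ^ 2 with hM2def
  have hs : 0 < Real.sqrt M2 := Real.sqrt_pos.mpr hM2
  have h2 : (0:ℝ) < Real.sqrt 2 := Real.sqrt_pos.mpr (by norm_num)
  have hnpos : (0:ℝ) < n := by exact_mod_cast hn
  -- from hSc2: n * mu1 = lam2
  have hmu : (n:ℝ) * mu1 = lam2 := by linarith
  have ha : Real.sqrt 2 * n * (a1 + n * a2) / Real.sqrt M2 = 2 * lam2 := by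
    have := hSa2; rw [hmu] at this; linarith
  have he : Real.sqrt 2 * n * e / Real.sqrt M2 = 2 * lam2 := by linarith
  have key : a1 + n * a2 = e := by
    have h := ha.trans he.symm
    field_simp at h; exact h
  refine ⟨key, ?_⟩
  have hlin := hfeas.1.2.2.2.2.2.2.1
  have : c1 + n * c2 = -(a1 + n * a2) := by ring_nf; ring_nf at hlin; linarith
  rw [this, key]
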